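/- Let b ∈ ℝ^m with |b(i)| ≤ 1 for all i, let q* be the supervertex of P(b), and let u be an ℓ-positive vector. Then max{⟨u⁺, x⟩ : x ∈ P(b)} = ⟨u⁺, q*⟩, where u⁺ is the pointwise truncation max{u(·),0}. -/

import Mathlib

open Finset

/-- The value λ(k) for λ ∈ Λ = {0,1}^m, extended by the conventions λ(0) = 0 and
λ(m+1) = 1 (positions 1,…,m carry the actual values of λ). -/
def lamExt (m : ℕ) (lam : Fin m → Bool) (k : ℕ) : ℕ :=
  if h : 1 ≤ k ∧ k ≤ m then (if lam ⟨k - 1, by omega⟩ then 1 else 0)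
  else if k = 0 then 0 else 1

/-- The vector ℓ_i ∈ ℝ^Λ, ℓ_i(λ) = (−1)^{λ(i)}, for 0 ≤ i ≤ m. -/
def ell (m : ℕ) (i : ℕ) (lam : Fin m → Bool) : ℝ := (-1) ^ lamExt m lam i

/-- The standard inner product on ℝ^Λ. -/
def ip (m : ℕ) (x y : (Fin m → Bool) → ℝ) : ℝ := ∑ lam : Fin m → Bool, x lam * y lam

/-- The polytope P(b). -/
def Pb (m : ℕ) (b : ℕ → ℝ) : Set ((Fin m → Bool) → ℝ) :=
  {x | ip m (ell m 0) x = 1 ∧ (∀ i ∈ Finset.Icc 1 m, ip m (ell m i) x = b i) ∧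
    ∀ lam, 0 ≤ x lam}

/-- b extended by the conventions b(0) = 1 and b(m+1) = −1. -/
noncomputable def bext (m : ℕ) (b : ℕ → ℝ) (k : ℕ) : ℝ :=
  if k = 0 then 1 else if k ≤ m then b k else -1

/-- b'(i) = (b(i) − b(i+1))/2 for 0 ≤ i ≤ m. -/
noncomputable def b' (m : ℕ) (b : ℕ → ℝ) (i : ℕ) : ℝ :=
  (bext m b i - bext m b (i + 1)) / 2

/-- μ_i ∈ Λ: μ_i(k) = 0 for k ≤ i, μ_i(k) = 1 for k ≥ i+1. -/
def mu (m i : ℕ) : Fin m → Bool := fun k => decide (i ≤ (k : ℕ))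

/-- The supervertex Σ_{i=0}^m b'(i)·e_{μ_i} (for decreasing b). -/
noncomputable def supervertexDec (m : ℕ) (b : ℕ → ℝ) : (Fin m → Bool) → ℝ :=
  fun lam => ∑ i ∈ Finset.range (m + 1), b' m b i * (if lam = mu m i then 1 else 0)

/-- The induced action σ_*(x)(λ) = x(λ∘σ) on ℝ^Λ. -/
def act (m : ℕ) (σ : Equiv.Perm (Fin m)) (x : (Fin m → Bool) → ℝ) :
    (Fin m → Bool) → ℝ := fun lam => x (lam ∘ σ)

/-- u is ℓ-positive if u = Σ_{i=0}^m a_i ℓ_i with a_1,…,a_m > 0. -/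
def lpos (m : ℕ) (u : (Fin m → Bool) → ℝ) : Prop :=
  ∃ a : ℕ → ℝ, (∀ i ∈ Finset.Icc 1 m, 0 < a i) ∧
    u = fun lam => ∑ i ∈ Finset.range (m + 1), a i * ell m i lam

/-- The truncation u⁺ = max{u(·), 0}. -/
noncomputable def truncPos (m : ℕ) (u : (Fin m → Bool) → ℝ) : (Fin m → Bool) → ℝ :=
  fun lam => max (u lam) 0

/-!
Write `u = a₀ + ∑ aᵢ ℓᵢ`. Since `ℓᵢ(λ) = 1 - 2λ(i)`, we get `u⁺(λ) = f(∑_{λ(i)=1} aᵢ)` for the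
convex function `f s = max (∑ aᵢ - 2s) 0` and nonnegative weights `aᵢ`. After permuting the
coordinates so that `b` is decreasing, the supervertex is supported on the chain `μ₀, …, μ_m`.
Because increments of a convex function grow with the base point, there is an `ℓ`-affine function
`y ≥ u⁺` that agrees with `u⁺` on this chain. Being `ℓ`-affine, `⟨y, x⟩` is the same for every
`x ∈ P(b)`, hence `⟨u⁺, x⟩ ≤ ⟨y, x⟩ = ⟨y, q*⟩ = ⟨u⁺, q*⟩`: `y` is a dual certificate.
-/

theorem ConvexOn.map_add_sub_map_le {f : ℝ → ℝ} (hf : ConvexOn ℝ Set.univ f) {s t a : ℝ}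
    (hst : s ≤ t) (ha : 0 ≤ a) : f (s + a) - f s ≤ f (t + a) - f t := by
  rcases (add_nonneg (sub_nonneg.2 hst) ha).eq_or_lt with hd | hd
  · obtain rfl : s = t := by linarith
    obtain rfl : a = 0 := by linarith
    simp
  -- `s + a` and `t` are the convex combinations of `s` and `t + a` with swapped weights `p`, `q`.
  set p := (t - s) / (t - s + a)
  set q := a / (t - s + a)
  have hp : 0 ≤ p := div_nonneg (sub_nonneg.2 hst) hd.le
  have hq : 0 ≤ q := div_nonneg ha hd.le
  have hpq : p + q = 1 := by rw [← add_div, div_eq_one_iff_eq hd.ne']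
  have h₁ := hf.2 (Set.mem_univ s) (Set.mem_univ (t + a)) hp hq hpq
  have h₂ := hf.2 (Set.mem_univ s) (Set.mem_univ (t + a)) hq hp (by rw [add_comm, hpq])
  have e₁ : p * s + q * (t + a) = s + a := by simp only [p, q]; field_simp; ring
  have e₂ : q * s + p * (t + a) = t := by simp only [p, q]; field_simp; ring
  simp only [smul_eq_mul, e₁, e₂] at h₁ h₂
  linear_combination h₁ + h₂ + (f s + f (t + a)) * hpq

theorem ConvexOn.map_sum_le_add_sum_tail_sub {f : ℝ → ℝ} (hf : ConvexOn ℝ Set.univ f)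
    {w : ℕ → ℝ} {N : ℕ} (hw : ∀ k < N, 0 ≤ w k) {s : Finset ℕ} (hs : s ⊆ range N) :
    f (∑ k ∈ s, w k) ≤
      f 0 + ∑ k ∈ s, (f (∑ j ∈ Ico k N, w j) - f (∑ j ∈ Ico (k + 1) N, w j)) := by
  induction s using Finset.induction_on_min with
  | empty => simp
  | insert k s hk ih =>
    have hkN : k < N := by simpa using hs (mem_insert_self k s)
    have hks : k ∉ s := fun h => lt_irrefl k (hk k h)
    have hsN : s ⊆ Ico (k + 1) N := fun j hj =>
      mem_Ico.2 ⟨hk j hj, by simpa using hs (mem_insert_of_mem hj)⟩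
    have hle : ∑ j ∈ s, w j ≤ ∑ j ∈ Ico (k + 1) N, w j :=
      sum_le_sum_of_subset_of_nonneg hsN fun j hj _ => hw j (mem_Ico.1 hj).2
    have hinc := hf.map_add_sub_map_le hle (hw k hkN)
    have ih' := ih ((subset_insert k s).trans hs)
    rw [sum_insert hks, sum_insert hks, sum_eq_sum_Ico_succ_bot hkN, add_comm (w k),
      add_comm (w k)]
    linarith

lemma convexOn_max_sub_two_mul (A : ℝ) : ConvexOn ℝ Set.univ fun s : ℝ => max (A - 2 * s) 0 := by
  refine ⟨convex_univ, fun x _ y _ p q hp hq hpq => ?_⟩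
  simp only [smul_eq_mul]
  refine max_le ?_ (by positivity)
  have hx := le_max_left (A - 2 * x) 0
  have hy := le_max_left (A - 2 * y) 0
  calc A - 2 * (p * x + q * y) = p * (A - 2 * x) + q * (A - 2 * y) := by
        linear_combination (-A) * hpq
    _ ≤ _ := by gcongr

section Ell

variable {m : ℕ}

lemma lamExt_eq_zero_or_eq_one (lam : Fin m → Bool) (k : ℕ) :
    lamExt m lam k = 0 ∨ lamExt m lam k = 1 := by
  unfold lamExt; split_ifs <;> simp

lemma lamExt_succ (lam : Fin m → Bool) (j : Fin m) :
    lamExt m lam (j + 1) = if lam j then 1 else 0 := by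
  rw [lamExt, dif_pos ⟨by omega, j.isLt⟩]
  rfl

lemma ell_zero (lam : Fin m → Bool) : ell m 0 lam = 1 := by
  simp [ell, lamExt]

lemma ell_succ (lam : Fin m → Bool) (j : Fin m) :
    ell m (j + 1) lam = if lam j then -1 else 1 := by
  rw [ell, lamExt_succ]
  split_ifs <;> norm_num

def ones (m : ℕ) (lam : Fin m → Bool) : Finset ℕ :=
  (range m).filter fun k => lamExt m lam (k + 1) = 1

lemma ones_subset_range (lam : Fin m → Bool) : ones m lam ⊆ range m := filter_subset _ _

lemma sum_ell_eq (c : ℕ → ℝ) (lam : Fin m → Bool) :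
    ∑ i ∈ range (m + 1), c i * ell m i lam =
      ∑ i ∈ range (m + 1), c i - 2 * ∑ k ∈ ones m lam, c (k + 1) := by
  have hell : ∀ k, c (k + 1) * ell m (k + 1) lam =
      c (k + 1) - 2 * if lamExt m lam (k + 1) = 1 then c (k + 1) else 0 := fun k => by
    rcases lamExt_eq_zero_or_eq_one lam (k + 1) with h | h
    · simp [ell, h]
    · simp [ell, h]; ring
  rw [sum_range_succ', sum_range_succ' c, ones, sum_filter, mul_sum, ell_zero]
  simp only [hell, sum_sub_distrib]
  ring

lemma lamExt_mu_succ {i k : ℕ} (hk : k < m) :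
    lamExt m (mu m i) (k + 1) = if i ≤ k then 1 else 0 := by
  rw [lamExt_succ (mu m i) ⟨k, hk⟩]
  simp [mu]

lemma ones_mu (i : ℕ) : ones m (mu m i) = Ico i m := by
  ext k
  simp only [ones, mem_filter, mem_range, mem_Ico]
  constructor
  · rintro ⟨hk, h⟩
    rw [lamExt_mu_succ hk] at h
    exact ⟨by simpa using h, hk⟩
  · rintro ⟨hik, hk⟩
    rw [lamExt_mu_succ hk, if_pos hik]
    exact ⟨hk, rfl⟩

lemma ell_mu {i j : ℕ} (hj : j ≤ m) : ell m j (mu m i) = if i < j then -1 else 1 := by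
  rcases j with _ | k
  · simp [ell_zero]
  · rw [ell, lamExt_mu_succ (by omega)]
    split_ifs <;> first | omega | norm_num

end Ell

section Polytope

variable {m : ℕ}

lemma ip_sum_ell (c : ℕ → ℝ) (x : (Fin m → Bool) → ℝ) :
    ip m (fun lam => ∑ i ∈ range (m + 1), c i * ell m i lam) x =
      ∑ i ∈ range (m + 1), c i * ip m (ell m i) x := by
  simp only [ip, sum_mul, mul_sum, mul_assoc]
  exact sum_comm

lemma exists_sum_ell_eq (E : ℝ) (g : ℕ → ℝ) : ∃ c : ℕ → ℝ, ∀ lam : Fin m → Bool,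
    E + ∑ k ∈ ones m lam, g k = ∑ i ∈ range (m + 1), c i * ell m i lam := by
  refine ⟨fun i => if i = 0 then E + (∑ k ∈ range m, g k) / 2 else -g (i - 1) / 2, fun lam => ?_⟩
  rw [sum_ell_eq, sum_range_succ']
  simp only [Nat.add_one_ne_zero, if_false, if_true, Nat.add_sub_cancel, neg_div, sum_neg_distrib,
    ← sum_div]
  ring

lemma ip_affine_congr (E : ℝ) (g : ℕ → ℝ) {x x' : (Fin m → Bool) → ℝ}
    (h : ∀ i ≤ m, ip m (ell m i) x = ip m (ell m i) x') :
    ip m (fun lam => E + ∑ k ∈ ones m lam, g k) x =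
      ip m (fun lam => E + ∑ k ∈ ones m lam, g k) x' := by
  obtain ⟨c, hc⟩ := exists_sum_ell_eq E g
  rw [funext hc, ip_sum_ell, ip_sum_ell]
  exact sum_congr rfl fun i hi => by rw [h i (Nat.lt_succ_iff.1 (mem_range.1 hi))]

lemma ip_mono_left {w w' x : (Fin m → Bool) → ℝ} (hw : ∀ lam, w lam ≤ w' lam)
    (hx : ∀ lam, 0 ≤ x lam) : ip m w x ≤ ip m w' x :=
  sum_le_sum fun lam _ => mul_le_mul_of_nonneg_right (hw lam) (hx lam)

lemma mem_Pb_iff {b : ℕ → ℝ} {x : (Fin m → Bool) → ℝ} :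
    x ∈ Pb m b ↔ (∀ i ≤ m, ip m (ell m i) x = bext m b i) ∧ ∀ lam, 0 ≤ x lam := by
  simp only [Pb, Set.mem_ofPred_eq, mem_Icc]
  refine ⟨fun ⟨h₀, h, hx⟩ => ⟨fun i hi => ?_, hx⟩, fun ⟨h, hx⟩ => ⟨?_, fun i hi => ?_, hx⟩⟩
  · rcases i with _ | i
    · simpa [bext] using h₀
    · simpa [bext, hi] using h (i + 1) ⟨by omega, hi⟩
  · simpa [bext] using h 0 (Nat.zero_le m)
  · have := h i hi.2
    rwa [bext, if_neg (by omega), if_pos hi.2] at this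

end Polytope

section Supervertex

variable {m : ℕ} {b : ℕ → ℝ}

lemma ip_supervertexDec (w : (Fin m → Bool) → ℝ) :
    ip m w (supervertexDec m b) = ∑ i ∈ range (m + 1), b' m b i * w (mu m i) := by
  simp only [ip, supervertexDec, mul_sum]
  rw [sum_comm]
  refine sum_congr rfl fun i _ => ?_
  simp [mul_comm]

lemma sum_Ico_b' {i n : ℕ} (h : i ≤ n) :
    ∑ k ∈ Ico i n, b' m b k = (bext m b i - bext m b n) / 2 := by
  rw [← neg_sub, ← sum_Ico_sub _ h, ← sum_neg_distrib, sum_div]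
  exact sum_congr rfl fun k _ => by rw [b', neg_sub]

lemma ip_ell_supervertexDec {j : ℕ} (hj : j ≤ m) :
    ip m (ell m j) (supervertexDec m b) = bext m b j := by
  rw [ip_supervertexDec, ← sum_range_add_sum_Ico _ (by omega : j ≤ m + 1)]
  have h₁ : ∑ i ∈ range j, b' m b i * ell m j (mu m i) = -∑ i ∈ Ico 0 j, b' m b i := by
    rw [← sum_neg_distrib, range_eq_Ico]
    exact sum_congr rfl fun i hi => by rw [ell_mu hj, if_pos (mem_Ico.1 hi).2]; ring
  have h₂ : ∑ i ∈ Ico j (m + 1), b' m b i * ell m j (mu m i) = ∑ i ∈ Ico j (m + 1), b' m b i :=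
    sum_congr rfl fun i hi => by rw [ell_mu hj, if_neg (by simp at hi; omega), mul_one]
  rw [h₁, h₂, sum_Ico_b' (Nat.zero_le j), sum_Ico_b' (by omega)]
  simp only [bext, if_true, Nat.add_one_ne_zero, if_false, show ¬m + 1 ≤ m by omega]
  ring

lemma supervertexDec_mem_Pb (hb : ∀ i ≤ m, bext m b (i + 1) ≤ bext m b i) :
    supervertexDec m b ∈ Pb m b := by
  refine mem_Pb_iff.2 ⟨fun j hj => ip_ell_supervertexDec hj, fun lam => sum_nonneg fun i hi => ?_⟩
  have := hb i (Nat.lt_succ_iff.1 (mem_range.1 hi))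
  have : 0 ≤ b' m b i := by rw [b']; linarith
  positivity

end Supervertex

section Majorant

variable {m : ℕ}

/-- The dual certificate: an `ℓ`-affine majorant of `λ ↦ f (∑ k ∈ ones m λ, w k)` that is tight
on the chain `μ_0, …, μ_m` carrying the supervertex. -/
noncomputable def chainMajorant (m : ℕ) (f : ℝ → ℝ) (w : ℕ → ℝ) (lam : Fin m → Bool) : ℝ :=
  f 0 + ∑ k ∈ ones m lam, (f (∑ j ∈ Ico k m, w j) - f (∑ j ∈ Ico (k + 1) m, w j))

lemma le_chainMajorant {f : ℝ → ℝ} (hf : ConvexOn ℝ Set.univ f) {w : ℕ → ℝ}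
    (hw : ∀ k < m, 0 ≤ w k) (lam : Fin m → Bool) :
    f (∑ k ∈ ones m lam, w k) ≤ chainMajorant m f w lam :=
  hf.map_sum_le_add_sum_tail_sub hw (ones_subset_range lam)

lemma chainMajorant_mu (f : ℝ → ℝ) (w : ℕ → ℝ) {i : ℕ} (hi : i ≤ m) :
    chainMajorant m f w (mu m i) = f (∑ j ∈ Ico i m, w j) := by
  have h := sum_Ico_sub (fun k => f (∑ j ∈ Ico k m, w j)) hi
  rw [← neg_inj, ← sum_neg_distrib] at h
  simp only [neg_sub, Ico_self, sum_empty] at h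
  rw [chainMajorant, ones_mu, h]
  ring

lemma ip_truncPos_le_supervertexDec {b : ℕ → ℝ} {u x : (Fin m → Bool) → ℝ} (hu : lpos m u)
    (hx : x ∈ Pb m b) :
    ip m (truncPos m u) x ≤ ip m (truncPos m u) (supervertexDec m b) := by
  obtain ⟨a, ha, rfl⟩ := hu
  obtain ⟨hx, hx₀⟩ := mem_Pb_iff.1 hx
  set f : ℝ → ℝ := fun s => max (∑ i ∈ range (m + 1), a i - 2 * s) 0
  set w : ℕ → ℝ := fun k => a (k + 1)
  have hw : ∀ k < m, 0 ≤ w k := fun k hk => (ha (k + 1) (mem_Icc.2 ⟨by omega, hk⟩)).le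
  have htrunc : truncPos m (fun lam => ∑ i ∈ range (m + 1), a i * ell m i lam) =
      fun lam => f (∑ k ∈ ones m lam, w k) := by
    funext lam
    simp only [truncPos, sum_ell_eq, f, w]
  rw [htrunc]
  calc ip m (fun lam => f (∑ k ∈ ones m lam, w k)) x
      ≤ ip m (chainMajorant m f w) x :=
        ip_mono_left (le_chainMajorant (convexOn_max_sub_two_mul _) hw) hx₀
    _ = ip m (chainMajorant m f w) (supervertexDec m b) :=
        ip_affine_congr _ _ fun i hi => (hx i hi).trans (ip_ell_supervertexDec hi).symm
    _ = ip m (fun lam => f (∑ k ∈ ones m lam, w k)) (supervertexDec m b) := by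
        simp only [ip_supervertexDec]
        refine sum_congr rfl fun i hi => ?_
        rw [chainMajorant_mu f w (Nat.lt_succ_iff.1 (mem_range.1 hi)), ones_mu]

end Majorant

section Permutation

variable {m : ℕ}

lemma forall_mem_Icc_one_iff {P : ℕ → Prop} : (∀ i ∈ Icc 1 m, P i) ↔ ∀ j : Fin m, P (j + 1) :=
  ⟨fun h j => h _ (mem_Icc.2 ⟨by omega, j.isLt⟩), fun h i hi => by
    obtain ⟨hi₁, hi₂⟩ := mem_Icc.1 hi
    simpa [Nat.sub_add_cancel hi₁] using h ⟨i - 1, by omega⟩⟩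

lemma ip_act (σ : Equiv.Perm (Fin m)) (w x : (Fin m → Bool) → ℝ) :
    ip m (act m σ w) (act m σ x) = ip m w x :=
  Fintype.sum_equiv (Equiv.arrowCongr σ.symm (Equiv.refl Bool)) _ _ fun _ => rfl

lemma act_act_inv (σ : Equiv.Perm (Fin m)) (x : (Fin m → Bool) → ℝ) :
    act m σ (act m σ⁻¹ x) = x := by
  funext lam
  simp [act, Function.comp_def]

lemma ell_succ_comp (σ : Equiv.Perm (Fin m)) (j : Fin m) (lam : Fin m → Bool) :
    ell m (j + 1) (lam ∘ σ) = ell m (σ j + 1) lam := by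
  simp only [ell_succ, Function.comp_apply]

lemma ip_ell_zero_act (σ : Equiv.Perm (Fin m)) (x : (Fin m → Bool) → ℝ) :
    ip m (ell m 0) (act m σ x) = ip m (ell m 0) x := by
  conv_lhs => rw [show ell m 0 = act m σ (ell m 0) by funext; simp [act, ell_zero]]
  exact ip_act σ _ x

lemma ip_ell_succ_act (σ : Equiv.Perm (Fin m)) (j : Fin m) (x : (Fin m → Bool) → ℝ) :
    ip m (ell m (j + 1)) (act m σ x) = ip m (ell m (σ⁻¹ j + 1)) x := by
  conv_lhs => rw [show ell m (j + 1) = act m σ (ell m (σ⁻¹ j + 1)) by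
    funext lam; simp [act, ell_succ_comp]]
  exact ip_act σ _ x

lemma act_mem_Pb_iff {b sb : ℕ → ℝ} {σ : Equiv.Perm (Fin m)}
    (hsb : ∀ i : Fin m, sb ((i : ℕ) + 1) = b (((σ⁻¹ i : Fin m) : ℕ) + 1))
    {x : (Fin m → Bool) → ℝ} : act m σ x ∈ Pb m sb ↔ x ∈ Pb m b := by
  simp only [Pb, Set.mem_ofPred_eq, forall_mem_Icc_one_iff, ip_ell_zero_act, ip_ell_succ_act, hsb]
  refine and_congr Iff.rfl (and_congr ⟨fun h j => by simpa using h (σ j), fun h j => h _⟩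
    ⟨fun h lam => by simpa [act, Function.comp_def] using h (lam ∘ ⇑σ⁻¹), fun h lam => h _⟩)

lemma lpos_act (σ : Equiv.Perm (Fin m)) {u : (Fin m → Bool) → ℝ} (hu : lpos m u) :
    lpos m (act m σ u) := by
  obtain ⟨a, ha, rfl⟩ := hu
  set a' : ℕ → ℝ := fun i =>
    if h : 1 ≤ i ∧ i ≤ m then a ((σ⁻¹ ⟨i - 1, by omega⟩ : Fin m) + 1) else a i
  have ha' : ∀ j : Fin m, a' (j + 1) = a ((σ⁻¹ j : Fin m) + 1) := fun j => by
    simp [a', Nat.succ_le_of_lt j.isLt]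
  refine ⟨a', forall_mem_Icc_one_iff.2 fun j => ?_, funext fun lam => ?_⟩
  · rw [ha']
    exact forall_mem_Icc_one_iff.1 ha _
  · simp only [act, sum_range_succ' _ m, ← Fin.sum_univ_eq_sum_range, ell_succ_comp, ha']
    rw [show a' 0 = a 0 by simp [a'], ell_zero, ell_zero,
      ← Equiv.sum_comp σ fun j => a ((σ⁻¹ j : Fin m) + 1) * ell m (j + 1) lam]
    simp

end Permutation

lemma bext_succ_le {m : ℕ} {b : ℕ → ℝ} (hb : ∀ i ∈ Icc 1 m, |b i| ≤ 1)
    (hdec : ∀ i, 1 ≤ i → i < m → b (i + 1) ≤ b i) {i : ℕ} (hi : i ≤ m) :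
    bext m b (i + 1) ≤ bext m b i := by
  rcases Nat.eq_zero_or_pos i with rfl | hi₀
  · have h₁ : bext m b 1 ≤ 1 := by
      rw [bext, if_neg one_ne_zero]
      split_ifs with h
      · exact (abs_le.1 (hb 1 (mem_Icc.2 ⟨le_rfl, h⟩))).2
      · norm_num
    simpa [bext] using h₁
  rcases hi.lt_or_eq with hlt | rfl
  · simp only [bext, if_neg (Nat.add_one_ne_zero i), if_neg hi₀.ne',
      if_pos (show i + 1 ≤ m from hlt), if_pos hi]
    exact hdec i hi₀ hlt
  · simp only [bext, if_neg (Nat.add_one_ne_zero i), if_neg hi₀.ne',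
      if_neg (Nat.not_succ_le_self i), if_pos le_rfl]
    linarith [(abs_le.1 (hb i (mem_Icc.2 ⟨hi₀, le_rfl⟩))).1]

theorem stmt16_general (m : ℕ) (b : ℕ → ℝ)
    (hb : ∀ i ∈ Finset.Icc 1 m, |b i| ≤ 1)
    (u : (Fin m → Bool) → ℝ) (hu : lpos m u)
    (σ : Equiv.Perm (Fin m)) (sb : ℕ → ℝ)
    (hsb : ∀ i : Fin m, sb ((i : ℕ) + 1)
      = b ((((σ⁻¹ : Equiv.Perm (Fin m)) i : Fin m) : ℕ) + 1))
    (hdec : ∀ i j, 1 ≤ i → i ≤ j → j ≤ m → sb j ≤ sb i) :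
    IsGreatest ((fun x => ip m (truncPos m u) x) '' Pb m b)
      (ip m (truncPos m u) (act m σ⁻¹ (supervertexDec m sb))) := by
  have hsb_abs : ∀ i ∈ Icc 1 m, |sb i| ≤ 1 :=
    forall_mem_Icc_one_iff.2 fun j => (hsb j).symm ▸ forall_mem_Icc_one_iff.1 hb _
  have hsorted : ∀ i ≤ m, bext m sb (i + 1) ≤ bext m sb i :=
    fun i => bext_succ_le hsb_abs fun k hk₁ hk₂ => hdec k (k + 1) hk₁ (by omega) hk₂
  have hval : ∀ x, ip m (truncPos m u) x = ip m (truncPos m (act m σ u)) (act m σ x) :=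
    fun x => (ip_act σ _ x).symm
  refine ⟨⟨_, (act_mem_Pb_iff hsb).1 ?_, rfl⟩, ?_⟩
  · rw [act_act_inv]
    exact supervertexDec_mem_Pb hsorted
  · rintro _ ⟨x, hx, rfl⟩
    simp only [hval, act_act_inv]
    exact ip_truncPos_le_supervertexDec (lpos_act σ hu) ((act_mem_Pb_iff hsb).2 hx)

/-- If |b(i)| ≤ 1 for all i, u is ℓ-positive, σ is a permutation of {1,…,m} whose
induced rearrangement sb = σ_*(b) (sb(i) = b(σ⁻¹(i))) is decreasing, and
q* = σ_*^{−1}(Σ_{i=0}^m sb'(i)·e_{μ_i}) is the supervertex of P(b), then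
⟨u⁺, q*⟩ is the maximum of ⟨u⁺, x⟩ over x ∈ P(b). -/
theorem stmt16 (m : ℕ) (hm : 1 ≤ m) (b : ℕ → ℝ)
    (hb : ∀ i ∈ Finset.Icc 1 m, |b i| ≤ 1)
    (u : (Fin m → Bool) → ℝ) (hu : lpos m u)
    (σ : Equiv.Perm (Fin m)) (sb : ℕ → ℝ)
    (hsb : ∀ i : Fin m, sb ((i : ℕ) + 1)
      = b ((((σ⁻¹ : Equiv.Perm (Fin m)) i : Fin m) : ℕ) + 1))
    (hdec : ∀ i j, 1 ≤ i → i ≤ j → j ≤ m → sb j ≤ sb i) :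
    IsGreatest ((fun x => ip m (truncPos m u) x) '' Pb m b)
      (ip m (truncPos m u) (act m σ⁻¹ (supervertexDec m sb))) :=
  stmt16_general m b hb u hu σ sb hsb hdec
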